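/- arXiv:1510.08248 — 2 statements merged into one kernel-verified Lean document; each statement's English description precedes it below -/
import Mathlib

section
/- Let N ∈ ℕ, let τ_1 < τ_2 < … < τ_N be real numbers, and for m = 1,…,N let a_0^{(m)} ∈ ℝ, a_1^{(m)} > 0, and F_m = [a_0^{(m)} − 2a_1^{(m)}, a_0^{(m)} + 2a_1^{(m)}]. Let f : {1,…,N} × ℝ → ℝ be such that x ↦ f(m,x) is continuously differentiable for each m, and set f̂_k^{(m)} = (1/π) ∫_0^π f(m, a_0^{(m)} + 2a_1^{(m)} cos θ) cos(kθ) dθ for k ≥ 1. Then the double series σ(f)² = Σ_{k=1}^∞ Σ_{m1,m2=1}^N k e^{−|τ_{m1}−τ_{m2}| k} f̂_k^{(m1)} f̂_k^{(m2)} converges absolutely, is nonnegative, and there exists a constant C, depending only on max_m a_1^{(m)}, such that σ(f)² ≤ C N Σ_{m=1}^N sup_{x ∈ F_m} |∂f/∂x(m,x)|². -/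
/-!
Integrating by parts, `k f̂_k = (2a₁/π) ∫₀^π f'(a₀ + 2a₁ cos θ) sin θ sin kθ dθ`, so Bessel's
inequality for the orthogonal system `sin kθ` on `[0, π]` gives
`Σ_k (k f̂_k)² ≤ 2 a₁² (sup_F |f'|)²`.
The `k`-th slice of `σ(f)²` is `k` times the quadratic form of the matrix `e^{-k|τᵢ - τⱼ|}` in the
`f̂_k^{(m)}`; this matrix is a Gram matrix in `L²(ℝ)`, so every slice is nonnegative. Since
`e^{-k|τᵢ - τⱼ|} / k ≤ 1`, Cauchy–Schwarz bounds the absolute slice by `N Σ_m (k f̂_k^{(m)})²`,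
which yields absolute convergence and the bound with `C = 2 Amax²`.
-/

open MeasureTheory Filter Topology

noncomputable section

/-- `f̂_k = (1/π) ∫_0^π f(a₀ + 2a₁ cos θ) cos(kθ) dθ`. -/
def cosCoeff (f : ℝ → ℝ) (a0 a1 : ℝ) (k : ℕ) : ℝ :=
  (1 / Real.pi) * ∫ θ in (0:ℝ)..Real.pi, f (a0 + 2 * a1 * Real.cos θ) * Real.cos (k * θ)

open Real

theorem natCast_mul_integral_mul_cos {g g' : ℝ → ℝ}
    (hg : ∀ x ∈ Set.uIcc 0 π, HasDerivAt g (g' x) x) (hg' : IntervalIntegrable g' volume 0 π)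
    (n : ℕ) :
    n * ∫ x in (0 : ℝ)..π, g x * cos (n * x) = -∫ x in (0 : ℝ)..π, g' x * sin (n * x) := by
  have hsin : ∀ x ∈ Set.uIcc 0 π, HasDerivAt (fun x => sin (n * x)) (cos (n * x) * n) x :=
    fun x _ => (hasDerivAt_const_mul (n : ℝ)).sin
  have hparts := intervalIntegral.integral_mul_deriv_eq_deriv_mul hg hsin hg'
    (Continuous.intervalIntegrable (by fun_prop) _ _)
  rw [mul_zero, sin_zero, sin_nat_mul_pi, mul_zero, mul_zero, sub_zero, zero_sub] at hparts
  rw [← hparts, ← intervalIntegral.integral_const_mul]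
  exact intervalIntegral.integral_congr fun x _ => by ring

theorem natCast_mul_cosCoeff {f : ℝ → ℝ} (hf : ContDiff ℝ 1 f) (a0 a1 : ℝ) (n : ℕ) :
    n * cosCoeff f a0 a1 n =
      2 * a1 / π * ∫ θ in (0 : ℝ)..π, deriv f (a0 + 2 * a1 * cos θ) * sin θ * sin (n * θ) := by
  have hderiv : ∀ θ ∈ Set.uIcc 0 π, HasDerivAt (fun θ => f (a0 + 2 * a1 * cos θ))
      (-(2 * a1) * (deriv f (a0 + 2 * a1 * cos θ) * sin θ)) θ := fun θ _ =>
    ((hf.differentiable one_ne_zero _).hasDerivAt.comp θ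
      (((hasDerivAt_cos θ).const_mul (2 * a1)).const_add a0)).congr_deriv (by ring)
  have hcont : Continuous (deriv f) := hf.continuous_deriv le_rfl
  rw [cosCoeff, mul_left_comm, natCast_mul_integral_mul_cos hderiv
    (Continuous.intervalIntegrable (by fun_prop) _ _)]
  simp_rw [mul_assoc (-(2 * a1)), intervalIntegral.integral_const_mul]
  ring

theorem integral_cos_int_mul (n : ℤ) :
    ∫ x in (0 : ℝ)..π, cos (n * x) = if n = 0 then π else 0 := by
  split_ifs with hn
  · simp [hn]
  · have hn' : (n : ℝ) ≠ 0 := Int.cast_ne_zero.2 hn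
    rw [intervalIntegral.integral_comp_mul_left (fun x => cos x) hn', integral_cos, mul_zero,
      sin_zero, sin_int_mul_pi, sub_zero, smul_zero]

theorem integral_sin_mul_sin (m n : ℕ) :
    ∫ x in (0 : ℝ)..π, sin ((m + 1) * x) * sin ((n + 1) * x) = if m = n then π / 2 else 0 := by
  have h : ∀ x : ℝ, sin ((m + 1) * x) * sin ((n + 1) * x) =
      (cos (((m - n : ℤ) : ℝ) * x) - cos (((m + n + 2 : ℤ) : ℝ) * x)) / 2 := fun x => by
    have := two_mul_sin_mul_sin ((m + 1) * x) ((n + 1) * x)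
    push_cast
    rw [show ((m : ℝ) - n) * x = (m + 1) * x - (n + 1) * x by ring,
      show ((m : ℝ) + n + 2) * x = (m + 1) * x + (n + 1) * x by ring, ← this]
    ring
  simp_rw [h]
  rw [intervalIntegral.integral_div, intervalIntegral.integral_sub
    (Continuous.intervalIntegrable (by fun_prop) _ _)
    (Continuous.intervalIntegrable (by fun_prop) _ _), integral_cos_int_mul, integral_cos_int_mul]
  split_ifs <;> first | omega | ring

theorem sum_sq_integral_mul_le {ι : Type*} [DecidableEq ι] {a b c : ℝ} (hab : a ≤ b)
    (hc : 0 < c) {e : ι → ℝ → ℝ} (he : ∀ k, Continuous (e k))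
    (horth : ∀ k l, ∫ x in a..b, e k x * e l x = if k = l then c else 0)
    {h : ℝ → ℝ} (hh : Continuous h) (s : Finset ι) :
    ∑ k ∈ s, (∫ x in a..b, h x * e k x) ^ 2 ≤ c * ∫ x in a..b, h x ^ 2 := by
  have ii : ∀ {u : ℝ → ℝ}, Continuous u → IntervalIntegrable u volume a b :=
    fun hu => hu.intervalIntegrable a b
  set coeff := fun k => ∫ x in a..b, h x * e k x
  set g := fun x => ∑ k ∈ s, coeff k * e k x
  have hg : Continuous g := by fun_prop
  have integral_g_mul : ∀ u : ℝ → ℝ, Continuous u →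
      ∫ x in a..b, g x * u x = ∑ k ∈ s, coeff k * ∫ x in a..b, e k x * u x := fun u hu => by
    simp_rw [g, Finset.sum_mul, mul_assoc]
    rw [intervalIntegral.integral_finsetSum fun k _ => ii (by fun_prop)]
    simp_rw [intervalIntegral.integral_const_mul]
  have hgh : ∫ x in a..b, g x * h x = ∑ k ∈ s, coeff k ^ 2 := by
    simp_rw [integral_g_mul h hh, coeff, mul_comm (e _ _), sq]
  have hgg : ∫ x in a..b, g x * g x = c * ∑ k ∈ s, coeff k ^ 2 := by
    rw [integral_g_mul g hg, Finset.mul_sum]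
    refine Finset.sum_congr rfl fun k hk => ?_
    simp_rw [mul_comm (e k _), integral_g_mul (e k) (he k), horth, mul_ite, mul_zero,
      Finset.sum_ite_eq', if_pos hk]
    ring
  have hexpand : ∫ x in a..b, (c * h x - g x) ^ 2 =
      c ^ 2 * (∫ x in a..b, h x ^ 2) - 2 * c * (∫ x in a..b, g x * h x) +
        ∫ x in a..b, g x * g x := by
    have : ∀ x, (c * h x - g x) ^ 2 = c ^ 2 * h x ^ 2 - 2 * c * (g x * h x) + g x * g x :=
      fun x => by ring
    simp_rw [this]
    rw [intervalIntegral.integral_add (ii (by fun_prop)) (ii (by fun_prop)),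
      intervalIntegral.integral_sub (ii (by fun_prop)) (ii (by fun_prop)),
      intervalIntegral.integral_const_mul, intervalIntegral.integral_const_mul]
  have hnonneg : 0 ≤ ∫ x in a..b, (c * h x - g x) ^ 2 :=
    intervalIntegral.integral_nonneg hab fun x _ => sq_nonneg _
  rw [hexpand, hgh, hgg] at hnonneg
  exact le_of_mul_le_mul_left (by nlinarith) hc

theorem sum_range_sq_mul_cosCoeff_le {f : ℝ → ℝ} (hf : ContDiff ℝ 1 f) (a0 : ℝ) {a1 : ℝ}
    (ha1 : 0 ≤ a1) (K : ℕ) :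
    ∑ k ∈ Finset.range K, (((k + 1 : ℕ) : ℝ) * cosCoeff f a0 a1 (k + 1)) ^ 2 ≤
      2 * a1 ^ 2 * sSup ((fun x => |deriv f x|) '' Set.Icc (a0 - 2 * a1) (a0 + 2 * a1)) ^ 2 := by
  set D := sSup ((fun x => |deriv f x|) '' Set.Icc (a0 - 2 * a1) (a0 + 2 * a1))
  set h := fun θ => deriv f (a0 + 2 * a1 * cos θ) * sin θ
  have hh : Continuous h := by have := hf.continuous_deriv le_rfl; fun_prop
  have hsq_le : ∀ θ, h θ ^ 2 ≤ D ^ 2 := fun θ => by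
    have hmem : a0 + 2 * a1 * cos θ ∈ Set.Icc (a0 - 2 * a1) (a0 + 2 * a1) := by
      constructor <;> nlinarith [neg_one_le_cos θ, cos_le_one θ]
    have hD := (hf.continuous_deriv le_rfl).abs.continuousOn.le_sSup_image_Icc hmem
    rw [← sq_abs, abs_mul]
    exact pow_le_pow_left₀ (by positivity)
      ((mul_le_of_le_one_right (abs_nonneg _) (abs_sin_le_one θ)).trans hD) 2
  have hint : ∫ θ in (0 : ℝ)..π, h θ ^ 2 ≤ π * D ^ 2 := by
    simpa using intervalIntegral.integral_mono_on (μ := volume) pi_pos.le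
      (Continuous.intervalIntegrable (by fun_prop) _ _) intervalIntegrable_const
      fun θ _ => hsq_le θ
  have hbessel := sum_sq_integral_mul_le pi_pos.le (by positivity : (0 : ℝ) < π / 2)
    (e := fun (k : ℕ) θ => sin ((k + 1) * θ)) (fun k => by fun_prop) integral_sin_mul_sin hh
    (Finset.range K)
  calc ∑ k ∈ Finset.range K, (((k + 1 : ℕ) : ℝ) * cosCoeff f a0 a1 (k + 1)) ^ 2
      = (2 * a1 / π) ^ 2 *
          ∑ k ∈ Finset.range K, (∫ θ in (0 : ℝ)..π, h θ * sin ((k + 1) * θ)) ^ 2 := by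
        simp_rw [natCast_mul_cosCoeff hf, Finset.mul_sum, mul_pow]; push_cast; rfl
    _ ≤ (2 * a1 / π) ^ 2 * (π / 2 * (π * D ^ 2)) := by gcongr; exact hbessel.trans (by gcongr)
    _ = 2 * a1 ^ 2 * D ^ 2 := by field_simp

theorem sum_sum_inner_mul_nonneg {E ι : Type*} [NormedAddCommGroup E] [InnerProductSpace ℝ E]
    (s : Finset ι) (v : ι → E) (c : ι → ℝ) :
    0 ≤ ∑ i ∈ s, ∑ j ∈ s, inner ℝ (v i) (v j) * c i * c j := by
  have h : ∑ i ∈ s, ∑ j ∈ s, inner ℝ (v i) (v j) * c i * c j =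
      inner ℝ (∑ i ∈ s, c i • v i) (∑ j ∈ s, c j • v j) := by
    simp only [sum_inner, inner_sum, real_inner_smul_left, real_inner_smul_right]
    exact Finset.sum_congr rfl fun i _ => Finset.sum_congr rfl fun j _ => by
      rw [real_inner_comm]; ring
  exact h ▸ real_inner_self_nonneg

/-- `e^{-K|s-t|} = e^{-K(s+t)} min(e^{2Ks}, e^{2Kt})`, and `min(a, b)` is the `L²` inner product
of the indicators of `(0, a]` and `(0, b]`. -/
theorem exists_inner_eq_exp_neg_abs_sub_mul {K : ℝ} (hK : 0 ≤ K) :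
    ∃ v : ℝ → Lp ℝ 2 (volume : Measure ℝ), ∀ s t, inner ℝ (v s) (v t) = exp (-|s - t| * K) := by
  refine ⟨fun s => exp (-K * s) •
    indicatorConstLp 2 (measurableSet_Ioc (a := 0) (b := exp (2 * K * s)))
      measure_Ioc_lt_top.ne (1 : ℝ), fun s t => ?_⟩
  rw [real_inner_smul_left, real_inner_smul_right,
    L2.real_inner_indicatorConstLp_one_indicatorConstLp_one _ _ measure_Ioc_lt_top.ne
      measure_Ioc_lt_top.ne, Set.Ioc_inter_Ioc, max_self,
    measureReal_def, Real.volume_Ioc, sub_zero,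
    ENNReal.toReal_ofReal (le_min (exp_pos _).le (exp_pos _).le)]
  rcases le_total s t with hst | hst
  · rw [min_eq_left (exp_le_exp.2 (by nlinarith)), abs_of_nonpos (by linarith), ← exp_add,
      ← exp_add]
    congr 1; ring
  · rw [min_eq_right (exp_le_exp.2 (by nlinarith)), abs_of_nonneg (by linarith), ← exp_add,
      ← exp_add]
    congr 1; ring

theorem sum_sum_exp_neg_abs_sub_mul_nonneg {ι : Type*} (s : Finset ι) (τ c : ι → ℝ) {K : ℝ}
    (hK : 0 ≤ K) : 0 ≤ ∑ i ∈ s, ∑ j ∈ s, exp (-|τ i - τ j| * K) * c i * c j := by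
  obtain ⟨v, hv⟩ := exists_inner_eq_exp_neg_abs_sub_mul hK
  simpa only [Function.comp_apply, hv] using sum_sum_inner_mul_nonneg s (v ∘ τ) c

theorem sum_sum_abs_mul_mul_le {ι : Type*} (s : Finset ι) {w : ι → ι → ℝ}
    (hw : ∀ i j, |w i j| ≤ 1) (x : ι → ℝ) :
    ∑ i ∈ s, ∑ j ∈ s, |w i j * x i * x j| ≤ s.card * ∑ i ∈ s, x i ^ 2 :=
  calc ∑ i ∈ s, ∑ j ∈ s, |w i j * x i * x j|
      ≤ ∑ i ∈ s, ∑ j ∈ s, |x i| * |x j| := by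
        gcongr with i _ j _
        rw [abs_mul, abs_mul, mul_assoc]
        exact mul_le_of_le_one_left (by positivity) (hw i j)
    _ = (∑ i ∈ s, |x i|) ^ 2 := by rw [sq, Finset.sum_mul_sum]
    _ ≤ s.card * ∑ i ∈ s, |x i| ^ 2 := sq_sum_le_card_mul_sum_sq
    _ = s.card * ∑ i ∈ s, x i ^ 2 := by simp_rw [sq_abs]

/-- The summand of `σ(f)²` at `(k + 1, m1, m2)`, with `c m k` standing for `f̂_k^{(m)}`. -/
def varianceSummand (τ : ℕ → ℝ) (c : ℕ → ℕ → ℝ) (k m1 m2 : ℕ) : ℝ :=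
  ((k + 1 : ℕ) : ℝ) * exp (-|τ m1 - τ m2| * ((k : ℝ) + 1)) * c m1 (k + 1) * c m2 (k + 1)

namespace varianceSummand

variable (τ : ℕ → ℝ) (c : ℕ → ℕ → ℝ) (N : ℕ)

theorem sum_sum_abs_le (k : ℕ) :
    ∑ m1 ∈ Finset.range N, ∑ m2 ∈ Finset.range N, |varianceSummand τ c k m1 m2| ≤
      N * ∑ m ∈ Finset.range N, (((k + 1 : ℕ) : ℝ) * c m (k + 1)) ^ 2 := by
  have hk : (0 : ℝ) < (k + 1 : ℕ) := by positivity
  have hw : ∀ m1 m2, |exp (-|τ m1 - τ m2| * ((k : ℝ) + 1)) / (k + 1 : ℕ)| ≤ 1 := fun m1 m2 => by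
    rw [abs_of_nonneg (by positivity), div_le_one hk]
    calc exp (-|τ m1 - τ m2| * ((k : ℝ) + 1)) ≤ 1 :=
          exp_le_one_iff.2 (mul_nonpos_of_nonpos_of_nonneg (neg_nonpos.2 (abs_nonneg _))
            (by positivity))
      _ ≤ _ := Nat.one_le_cast.2 k.succ_pos
  have h := sum_sum_abs_mul_mul_le (Finset.range N) hw (fun m => ((k + 1 : ℕ) : ℝ) * c m (k + 1))
  rw [Finset.card_range] at h
  convert h using 4 with m1 _ m2 _
  rw [varianceSummand]
  field_simp

theorem summable_abs (hc : ∀ m < N, Summable fun k => (((k + 1 : ℕ) : ℝ) * c m (k + 1)) ^ 2) :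
    Summable fun p : ℕ × Fin N × Fin N => |varianceSummand τ c p.1 p.2.1 p.2.2| := by
  refine (summable_prod_of_nonneg fun _ => abs_nonneg _).2 ⟨fun _ => .of_finite, ?_⟩
  refine .of_nonneg_of_le (fun _ => tsum_nonneg fun _ => abs_nonneg _) (fun k => ?_)
    ((summable_sum fun m hm => hc m (Finset.mem_range.1 hm)).mul_left (N : ℝ))
  rw [tsum_fintype, Fintype.sum_prod_type]
  simpa only [Finset.sum_range] using sum_sum_abs_le τ c N k

theorem tsum_nonneg :
    0 ≤ ∑' k, ∑ m1 ∈ Finset.range N, ∑ m2 ∈ Finset.range N, varianceSummand τ c k m1 m2 := by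
  refine _root_.tsum_nonneg fun k => ?_
  have h := sum_sum_exp_neg_abs_sub_mul_nonneg (Finset.range N) τ (fun m => c m (k + 1))
    (by positivity : (0 : ℝ) ≤ k + 1)
  have hfactor : ∀ m1 m2, varianceSummand τ c k m1 m2 =
      ((k + 1 : ℕ) : ℝ) * (exp (-|τ m1 - τ m2| * ((k : ℝ) + 1)) * c m1 (k + 1) * c m2 (k + 1)) :=
    fun m1 m2 => by rw [varianceSummand]; ring
  simp_rw [hfactor, ← Finset.mul_sum]
  exact mul_nonneg (by positivity) h

theorem tsum_le (hc : ∀ m < N, Summable fun k => (((k + 1 : ℕ) : ℝ) * c m (k + 1)) ^ 2) :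
    ∑' k, ∑ m1 ∈ Finset.range N, ∑ m2 ∈ Finset.range N, varianceSummand τ c k m1 m2 ≤
      N * ∑ m ∈ Finset.range N, ∑' k, (((k + 1 : ℕ) : ℝ) * c m (k + 1)) ^ 2 := by
  have hsum : ∀ m ∈ Finset.range N, Summable fun k => (((k + 1 : ℕ) : ℝ) * c m (k + 1)) ^ 2 :=
    fun m hm => hc m (Finset.mem_range.1 hm)
  have hbound : ∀ k,
      |∑ m1 ∈ Finset.range N, ∑ m2 ∈ Finset.range N, varianceSummand τ c k m1 m2| ≤
      N * ∑ m ∈ Finset.range N, (((k + 1 : ℕ) : ℝ) * c m (k + 1)) ^ 2 := fun k =>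
    (Finset.abs_sum_le_sum_abs _ _).trans <|
      (Finset.sum_le_sum fun _ _ => Finset.abs_sum_le_sum_abs _ _).trans (sum_sum_abs_le τ c N k)
  have hG := (summable_sum hsum).mul_left (N : ℝ)
  rw [← Summable.tsum_finsetSum hsum, ← tsum_mul_left]
  exact Summable.tsum_le_tsum (fun k => (le_abs_self _).trans (hbound k))
    (.of_norm_bounded hG hbound) hG

end varianceSummand

theorem variance_functional_bound_general (Amax : ℝ) :
    ∃ C : ℝ, ∀ (N : ℕ) (τ a0 a1 : ℕ → ℝ),
      (∀ m1 m2 : ℕ, m1 < m2 → m2 < N → τ m1 < τ m2) →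
      (∀ m < N, 0 < a1 m) →
      (∀ m < N, a1 m ≤ Amax) →
      ∀ f : ℕ → ℝ → ℝ, (∀ m < N, ContDiff ℝ 1 (f m)) →
        Summable (fun p : ℕ × Fin N × Fin N =>
          |((p.1 + 1 : ℕ) : ℝ) *
            Real.exp (-|τ p.2.1 - τ p.2.2| * ((p.1 : ℝ) + 1)) *
            cosCoeff (f p.2.1) (a0 p.2.1) (a1 p.2.1) (p.1 + 1) *
            cosCoeff (f p.2.2) (a0 p.2.2) (a1 p.2.2) (p.1 + 1)|) ∧
        0 ≤ (∑' k : ℕ, ∑ m1 ∈ Finset.range N, ∑ m2 ∈ Finset.range N,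
          ((k + 1 : ℕ) : ℝ) * Real.exp (-|τ m1 - τ m2| * ((k : ℝ) + 1)) *
            cosCoeff (f m1) (a0 m1) (a1 m1) (k + 1) *
            cosCoeff (f m2) (a0 m2) (a1 m2) (k + 1)) ∧
        (∑' k : ℕ, ∑ m1 ∈ Finset.range N, ∑ m2 ∈ Finset.range N,
          ((k + 1 : ℕ) : ℝ) * Real.exp (-|τ m1 - τ m2| * ((k : ℝ) + 1)) *
            cosCoeff (f m1) (a0 m1) (a1 m1) (k + 1) *
            cosCoeff (f m2) (a0 m2) (a1 m2) (k + 1)) ≤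
          C * N * ∑ m ∈ Finset.range N,
            (sSup ((fun x => |deriv (f m) x|) ''
              Set.Icc (a0 m - 2 * a1 m) (a0 m + 2 * a1 m))) ^ 2 := by
  refine ⟨2 * Amax ^ 2, fun N τ a0 a1 _ ha1 ha1_le f hf => ?_⟩
  set c : ℕ → ℕ → ℝ := fun m k => cosCoeff (f m) (a0 m) (a1 m) k
  set D : ℕ → ℝ := fun m => sSup ((fun x => |deriv (f m) x|) ''
    Set.Icc (a0 m - 2 * a1 m) (a0 m + 2 * a1 m))
  have hpartial : ∀ m < N, ∀ K, ∑ k ∈ Finset.range K, (((k + 1 : ℕ) : ℝ) * c m (k + 1)) ^ 2 ≤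
      2 * Amax ^ 2 * D m ^ 2 := fun m hm K =>
    (sum_range_sq_mul_cosCoeff_le (hf m hm) (a0 m) (ha1 m hm).le K).trans (by
      gcongr <;> linarith [ha1 m hm, ha1_le m hm])
  have hsum : ∀ m < N, Summable fun k => (((k + 1 : ℕ) : ℝ) * c m (k + 1)) ^ 2 := fun m hm =>
    summable_of_sum_range_le (fun _ => sq_nonneg _) (hpartial m hm)
  refine ⟨varianceSummand.summable_abs τ c N hsum, varianceSummand.tsum_nonneg τ c N, ?_⟩
  calc _ ≤ N * ∑ m ∈ Finset.range N, ∑' k, (((k + 1 : ℕ) : ℝ) * c m (k + 1)) ^ 2 :=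
        varianceSummand.tsum_le τ c N hsum
    _ ≤ N * ∑ m ∈ Finset.range N, 2 * Amax ^ 2 * D m ^ 2 := by
        gcongr with m hm
        exact tsum_le_of_sum_range_le (fun _ => sq_nonneg _) (hpartial m (Finset.mem_range.1 hm))
    _ = 2 * Amax ^ 2 * N * ∑ m ∈ Finset.range N, D m ^ 2 := by rw [← Finset.mul_sum]; ring

/-- **Lemma (the limiting variance functional is finite, nonnegative and controlled by
the derivative).**  For `τ_1 < … < τ_N`, `a_0^{(m)} ∈ ℝ`, `0 < a_1^{(m)} ≤ Amax` and
`f(m,·)` continuously differentiable, the double series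
`σ(f)² = Σ_{k≥1} Σ_{m1,m2} k e^{-|τ_{m1}-τ_{m2}|k} f̂_k^{(m1)} f̂_k^{(m2)}`
converges absolutely, is nonnegative, and satisfies
`σ(f)² ≤ C N Σ_m sup_{x ∈ F_m} |∂f/∂x(m,x)|²` for a constant `C` depending only on
`Amax` (a bound for `max_m a_1^{(m)}`), where
`F_m = [a_0^{(m)} − 2a_1^{(m)}, a_0^{(m)} + 2a_1^{(m)}]`. -/
theorem variance_functional_bound (Amax : ℝ) (hAmax : 0 < Amax) :
    ∃ C : ℝ, ∀ (N : ℕ) (τ a0 a1 : ℕ → ℝ),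
      (∀ m1 m2 : ℕ, m1 < m2 → m2 < N → τ m1 < τ m2) →
      (∀ m < N, 0 < a1 m) →
      (∀ m < N, a1 m ≤ Amax) →
      ∀ f : ℕ → ℝ → ℝ, (∀ m < N, ContDiff ℝ 1 (f m)) →
        Summable (fun p : ℕ × Fin N × Fin N =>
          |((p.1 + 1 : ℕ) : ℝ) *
            Real.exp (-|τ p.2.1 - τ p.2.2| * ((p.1 : ℝ) + 1)) *
            cosCoeff (f p.2.1) (a0 p.2.1) (a1 p.2.1) (p.1 + 1) *
            cosCoeff (f p.2.2) (a0 p.2.2) (a1 p.2.2) (p.1 + 1)|) ∧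
        0 ≤ (∑' k : ℕ, ∑ m1 ∈ Finset.range N, ∑ m2 ∈ Finset.range N,
          ((k + 1 : ℕ) : ℝ) * Real.exp (-|τ m1 - τ m2| * ((k : ℝ) + 1)) *
            cosCoeff (f m1) (a0 m1) (a1 m1) (k + 1) *
            cosCoeff (f m2) (a0 m2) (a1 m2) (k + 1)) ∧
        (∑' k : ℕ, ∑ m1 ∈ Finset.range N, ∑ m2 ∈ Finset.range N,
          ((k + 1 : ℕ) : ℝ) * Real.exp (-|τ m1 - τ m2| * ((k : ℝ) + 1)) *
            cosCoeff (f m1) (a0 m1) (a1 m1) (k + 1) *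
            cosCoeff (f m2) (a0 m2) (a1 m2) (k + 1)) ≤
          C * N * ∑ m ∈ Finset.range N,
            (sSup ((fun x => |deriv (f m) x|) ''
              Set.Icc (a0 m - 2 * a1 m) (a0 m + 2 * a1 m))) ^ 2 :=
  variance_functional_bound_general Amax
end
end

section
/- Let V be a real polynomial of even degree with positive leading coefficient, let n ≥ 1, and let p_j (j ≥ 0) be the orthonormal polynomials with respect to the measure e^{−nV(x)} dx on ℝ, with tridiagonal Jacobi matrix 𝒥 defined by x p_k(x) = a_{k+1} p_{k+1}(x) + b_k p_k(x) + a_k p_{k−1}(x). For t > 0 define φ_j^t(x) = (2π(1 − e^{−2t}))^{−1/2} ∫_ℝ p_{j−1}(y) exp( −n [ V(y) + (e^{−2t}(x² + y²) − 2 e^{−t} x y) / (2(1 − e^{−2t})) ] ) dy (j ≥ 1), and φ_j^0(x) = p_{j−1}(x). Then the φ_j^t satisfy the recurrence x φ_j^t(x) = Σ_k (𝕁^t)_{j,k} φ_k^t(x) for all x ∈ ℝ, where (𝕁^t)_{j,k} = e^{−t} (𝒥)_{j,k} if j > k, and (𝕁^t)_{j,k} = e^{−t} (𝒥)_{j,k}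 + 2 sinh(t) (V'(𝒥))_{j,k} if j ≤ k, with V'(𝒥) the polynomial V' evaluated at the banded matrix 𝒥 (indices of 𝕁^t and 𝒥 aligned with the labels j,k ≥ 1 of φ_j = c p_{j−1}). -/
/-!
With `c = e^{-t}` and `σ = (1 - c²)/c = 2 sinh t`, the exponent `R` of the Mehler kernel in
`φ_j^t(x) ∝ ∫ p_{j-1}(y) e^{-R(y)} dy` satisfies `x = c y + σ V'(y) - (σ/n) R'(y)`. Multiply by
`p_{j-1} e^{-R}` and integrate: the `R'` term integrates by parts to `∫ p_{j-1}' e^{-R}`, and what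
remains is `c y p_{j-1} + σ (V' p_{j-1} - p_{j-1}'/n)`. The first term expands by the three-term
recurrence into row `j` of `c 𝒥`; the second, by the string equation
`p_j' = n ∑_{k<j} V'(𝒥)_{jk} p_k` (integrate `(p_j p_k e^{-nV})'` over `ℝ`), into row `j` of the
upper triangular part of `σ V'(𝒥)`.
-/

open MeasureTheory Filter Topology

noncomputable section

/-- Entry `(𝒥)_{k,l}` of the tridiagonal Jacobi matrix with off-diagonal entries
`a_k` and diagonal entries `b_k` coming from the three-term recurrence
`x p_k = a_{k+1} p_{k+1} + b_k p_k + a_k p_{k-1}`. -/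
def jacEntry (a b : ℕ → ℝ) (k l : ℕ) : ℝ :=
  if l = k + 1 then a (k + 1) else if l = k then b k else if l + 1 = k then a k else 0

/-- Entries of the powers `𝒥^d` of the banded Jacobi matrix (well defined since `𝒥`
is banded, so all the sums are finite). -/
def jacPow (a b : ℕ → ℝ) : ℕ → ℕ → ℕ → ℝ
  | 0, i, j => if i = j then 1 else 0
  | d + 1, i, j => ∑ l ∈ Finset.range (i + d + 2), jacPow a b d i l * jacEntry a b l j

/-- Entries of `W(𝒥)`, the polynomial `W` evaluated at the banded Jacobi matrix `𝒥`. -/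
def polyOfJac (W : Polynomial ℝ) (a b : ℕ → ℝ) (i j : ℕ) : ℝ :=
  ∑ d ∈ Finset.range (W.natDegree + 1), W.coeff d * jacPow a b d i j

open Polynomial Real

theorem Finset.sum_range_ite_lt {M : Type*} [AddCommGroup M] (f : ℕ → M) {j n : ℕ} (h : j ≤ n) :
    ∑ k ∈ Finset.range n, (if k < j then 0 else f k) =
      ∑ k ∈ Finset.range n, f k - ∑ k ∈ Finset.range j, f k := by
  rw [← Finset.sum_range_add_sum_Ico _ h, ← Finset.sum_range_add_sum_Ico f h,
    Finset.sum_eq_zero fun k hk => if_pos (Finset.mem_range.1 hk),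
    Finset.sum_congr rfl fun k hk => if_neg (Finset.mem_Ico.1 hk).1.not_gt]
  abel

namespace Polynomial

theorem tendsto_eval_cocompact_atTop_of_even {P : ℝ[X]} (hev : Even P.natDegree)
    (hpos : 0 < P.natDegree) (hl : 0 < P.leadingCoeff) :
    Tendsto P.eval (cocompact ℝ) atTop := by
  have hdeg : 0 < P.degree := natDegree_pos_iff_degree_pos.1 hpos
  have hneg : 0 < (P.comp (-X)).degree := by
    rw [natDegree_pos_iff_degree_pos.symm, natDegree_comp]; simpa using hpos
  have hneg_l : 0 < (P.comp (-X)).leadingCoeff := by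
    rw [leadingCoeff_comp (by simp)]; simpa [hev.neg_one_pow] using hl
  rw [cocompact_eq_atBot_atTop, tendsto_sup]
  refine ⟨?_, P.tendsto_atTop_of_leadingCoeff_nonneg hdeg hl.le⟩
  refine ((P.comp (-X)).tendsto_atTop_of_leadingCoeff_nonneg hneg hneg_l.le).comp
    tendsto_neg_atBot_atTop |>.congr fun y => ?_
  simp

theorem exists_quadratic_le_eval {P : ℝ[X]} (hev : Even P.natDegree) (hpos : 0 < P.natDegree)
    (hl : 0 < P.leadingCoeff) : ∃ c > 0, ∃ C, ∀ y, c * y ^ 2 - C ≤ P.eval y := by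
  -- `P - (l/2) X^D` still has even degree and positive leading coefficient, so it is bounded
  -- below, and `y^D ≥ y² - 1`
  set D := P.natDegree
  set W := P - C (P.leadingCoeff / 2) * X ^ D
  have hWcoeff : W.coeff D = P.leadingCoeff / 2 := by
    simp only [W, D, coeff_sub, coeff_natDegree, coeff_C_mul, coeff_X_pow_self, mul_one]
    ring
  have hWD : W.natDegree = D :=
    natDegree_eq_of_le_of_coeff_ne_zero
      ((natDegree_sub_le _ _).trans (max_le le_rfl (natDegree_C_mul_X_pow_le _ _)))
      (by rw [hWcoeff]; positivity)
  have hWl : W.leadingCoeff = P.leadingCoeff / 2 := by rw [leadingCoeff, hWD, hWcoeff]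
  obtain ⟨y₀, hy₀⟩ := W.continuous.exists_forall_le
    (tendsto_eval_cocompact_atTop_of_even (hWD ▸ hev) (hWD ▸ hpos) (by rw [hWl]; positivity))
  refine ⟨P.leadingCoeff / 2, by positivity, P.leadingCoeff / 2 - W.eval y₀, fun y => ?_⟩
  obtain ⟨m, hm⟩ := hev
  have hpow : y ^ 2 - 1 ≤ y ^ D := by
    rw [show D = 2 * m by omega, pow_mul]
    rcases le_total 1 (y ^ 2) with h | h
    · linarith [le_self_pow₀ h (show m ≠ 0 by omega)]
    · linarith [pow_nonneg (sq_nonneg y) m]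
  have hW : ∀ z, W.eval z = P.eval z - P.leadingCoeff / 2 * z ^ D := fun z => by simp [W]
  nlinarith [hy₀ y, hW y, mul_le_mul_of_nonneg_left hpow (by positivity : 0 ≤ P.leadingCoeff / 2)]

theorem natDegree_pos_of_integral_ne_zero {V q : ℝ[X]} (hq : q.natDegree = 0) {N : ℝ}
    (h : ∫ x, q.eval x * q.eval x * exp (-N * V.eval x) ≠ 0) : 0 < V.natDegree := by
  refine Nat.pos_of_ne_zero fun hV => h ?_
  rw [eq_C_of_natDegree_eq_zero hV, eq_C_of_natDegree_eq_zero hq]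
  -- a constant integrand is not integrable on `ℝ`, so its integral is `0`
  simp [Measure.real]

end Polynomial

theorem Real.two_mul_sinh_eq (t : ℝ) : 2 * sinh t = (1 - exp (-t) ^ 2) / exp (-t) := by
  rw [sinh_eq, exp_neg]
  field_simp

theorem integrable_eval_mul_exp_neg_mul_sq (q : ℝ[X]) {c : ℝ} (hc : 0 < c) :
    Integrable fun y => q.eval y * exp (-c * y ^ 2) := by
  simp_rw [eval_eq_sum_range, Finset.sum_mul]
  refine integrable_finsetSum _ fun i _ => ?_
  simp_rw [mul_assoc]
  simpa [rpow_natCast] using (integrable_rpow_mul_exp_neg_mul_sq hc (s := i)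
    (by linarith [i.cast_nonneg (α := ℝ)])).const_mul (q.coeff i)

theorem integrable_eval_mul_exp_neg (q : ℝ[X]) {E : ℝ → ℝ} (hE : Continuous E) {c C : ℝ}
    (hc : 0 < c) (hEc : ∀ y, c * y ^ 2 - C ≤ E y) :
    Integrable fun y => q.eval y * exp (-E y) := by
  refine ((integrable_eval_mul_exp_neg_mul_sq q hc).norm.const_mul (exp C)).mono'
    (q.continuous.mul hE.neg.rexp).aestronglyMeasurable (.of_forall fun y => ?_)
  have : exp (-E y) ≤ exp C * exp (-c * y ^ 2) := by
    rw [← exp_add]; exact exp_le_exp.2 (by linarith [hEc y])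
  simp only [norm_mul, norm_eq_abs, abs_exp]
  calc |q.eval y| * exp (-E y) ≤ |q.eval y| * (exp C * exp (-c * y ^ 2)) := by gcongr
    _ = _ := by ring

theorem integral_derivative_sub_mul_exp_neg (R q : ℝ[X]) {c C : ℝ} (hc : 0 < c)
    (hR : ∀ y, c * y ^ 2 - C ≤ R.eval y) :
    ∫ y, (q.derivative.eval y - R.derivative.eval y * q.eval y) * exp (-R.eval y) = 0 := by
  refine integral_eq_zero_of_hasDerivAt_of_integrable (f := fun y => q.eval y * exp (-R.eval y))
    (fun y => ?_) ?_ (integrable_eval_mul_exp_neg q R.continuous hc hR)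
  · exact ((q.hasDerivAt y).mul (R.hasDerivAt y).neg.exp).congr_deriv
      (by simp only [Pi.neg_apply]; ring)
  · simpa using integrable_eval_mul_exp_neg (q.derivative - R.derivative * q) R.continuous hc hR

section JacobiMatrix

variable {a b : ℕ → ℝ} {k l : ℕ}

theorem jacEntry_self : jacEntry a b k k = b k := by
  rw [jacEntry, if_neg (by omega), if_pos rfl]

theorem jacEntry_succ : jacEntry a b k (k + 1) = a (k + 1) := if_pos rfl

theorem jacEntry_succ_left : jacEntry a b (k + 1) k = a (k + 1) := by
  rw [jacEntry, if_neg (by omega), if_neg (by omega), if_pos rfl]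

theorem jacEntry_eq_zero_of_lt (h : k + 1 < l) : jacEntry a b k l = 0 := by
  rw [jacEntry, if_neg (by omega), if_neg (by omega), if_neg (by omega)]

theorem jacEntry_eq_zero_of_gt (h : l + 1 < k) : jacEntry a b k l = 0 := by
  rw [jacEntry, if_neg (by omega), if_neg (by omega), if_neg (by omega)]

end JacobiMatrix

theorem jacPow_eq_zero_of_lt (a b : ℕ → ℝ) {d i k : ℕ} (h : i + d < k) :
    jacPow a b d i k = 0 := by
  induction d generalizing k with
  | zero => simp only [jacPow]; rw [if_neg (by omega)]
  | succ d ih =>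
    refine Finset.sum_eq_zero fun l _ => ?_
    by_cases hl : i + d < l
    · rw [ih hl, zero_mul]
    · rw [jacEntry_eq_zero_of_lt (by omega), mul_zero]

theorem polyOfJac_eq_zero_of_lt (W : ℝ[X]) (a b : ℕ → ℝ) {j k : ℕ} (h : j + W.natDegree < k) :
    polyOfJac W a b j k = 0 :=
  Finset.sum_eq_zero fun d hd => by
    rw [jacPow_eq_zero_of_lt a b (by have := Finset.mem_range.1 hd; omega), mul_zero]

def ThreeTermRecurrence (p : ℕ → ℝ[X]) (a b : ℕ → ℝ) : Prop :=
  ∀ j (x : ℝ), x * (p j).eval x =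
    a (j + 1) * (p (j + 1)).eval x + b j * (p j).eval x +
      (if j = 0 then 0 else a j * (p (j - 1)).eval x)

section ThreeTermRecurrence

variable {p : ℕ → ℝ[X]} {a b : ℕ → ℝ} (hrec : ThreeTermRecurrence p a b)
include hrec

theorem mul_eval_eq_sum_jacEntry (k : ℕ) (y : ℝ) :
    y * (p k).eval y = ∑ m ∈ Finset.range (k + 2), jacEntry a b k m * (p m).eval y := by
  rw [hrec, Finset.sum_range_succ, Finset.sum_range_succ, jacEntry_self, jacEntry_succ]
  rcases k with _ | k
  · rw [Finset.sum_range_zero, if_pos rfl]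
    ring
  · rw [Finset.sum_range_succ, Finset.sum_eq_zero fun m hm => by
        rw [jacEntry_eq_zero_of_gt (by have := Finset.mem_range.1 hm; omega), zero_mul],
      jacEntry_succ_left, if_neg k.succ_ne_zero, Nat.add_sub_cancel]
    ring

theorem pow_mul_eval_eq_sum_jacPow (d j : ℕ) (y : ℝ) :
    y ^ d * (p j).eval y = ∑ k ∈ Finset.range (j + d + 1), jacPow a b d j k * (p k).eval y := by
  induction d with
  | zero => simp [jacPow]
  | succ d ih =>
    have hJ : ∀ k ∈ Finset.range (j + d + 1), y * (p k).eval y =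
        ∑ m ∈ Finset.range (j + d + 2), jacEntry a b k m * (p m).eval y := by
      intro k hk
      rw [mul_eval_eq_sum_jacEntry hrec, Finset.eventually_constant_sum (N := k + 2)
        (n := j + d + 2) (fun m hm => by rw [jacEntry_eq_zero_of_lt (by omega), zero_mul])
        (by have := Finset.mem_range.1 hk; omega)]
    calc y ^ (d + 1) * (p j).eval y
        = ∑ k ∈ Finset.range (j + d + 1), jacPow a b d j k * (y * (p k).eval y) := by
          rw [pow_succ', mul_assoc, ih, Finset.mul_sum]
          exact Finset.sum_congr rfl fun k _ => mul_left_comm _ _ _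
      _ = ∑ k ∈ Finset.range (j + d + 2), ∑ m ∈ Finset.range (j + d + 2),
            jacPow a b d j k * (jacEntry a b k m * (p m).eval y) := by
          rw [Finset.eventually_constant_sum (N := j + d + 1) (n := j + d + 2)
            (fun k hk => by simp [jacPow_eq_zero_of_lt a b (show j + d < k by omega)]) (by omega)]
          exact Finset.sum_congr rfl fun k hk => by rw [hJ k hk, Finset.mul_sum]
      _ = ∑ m ∈ Finset.range (j + (d + 1) + 1), jacPow a b (d + 1) j m * (p m).eval y := by
          rw [Finset.sum_comm]
          simp only [jacPow, Finset.sum_mul, mul_assoc]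
          rfl

theorem X_mul_eq_sum_jacEntry (k : ℕ) :
    X * p k = ∑ m ∈ Finset.range (k + 2), C (jacEntry a b k m) * p m :=
  Polynomial.funext fun y => by
    simpa [eval_finsetSum] using mul_eval_eq_sum_jacEntry hrec k y

theorem mul_eq_sum_polyOfJac (W : ℝ[X]) (j : ℕ) :
    W * p j = ∑ k ∈ Finset.range (j + W.natDegree + 1), C (polyOfJac W a b j k) * p k := by
  refine Polynomial.funext fun y => ?_
  simp only [eval_mul, eval_finsetSum, eval_C, eval_eq_sum_range (p := W), Finset.sum_mul,
    polyOfJac]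
  rw [Finset.sum_comm]
  refine Finset.sum_congr rfl fun d hd => ?_
  rw [mul_assoc, pow_mul_eval_eq_sum_jacPow hrec, Finset.mul_sum,
    Finset.eventually_constant_sum (n := j + W.natDegree + 1) (N := j + d + 1)
      (fun k hk => by rw [jacPow_eq_zero_of_lt a b (by omega), mul_zero, zero_mul])
      (by have := Finset.mem_range.1 hd; omega)]
  exact Finset.sum_congr rfl fun k _ => by ring

end ThreeTermRecurrence

theorem exists_eq_sum_of_degree_lt {p : ℕ → ℝ[X]} (hdeg : ∀ k, (p k).degree = k) {m : ℕ}
    {q : ℝ[X]} (hq : q.degree < m) : ∃ c : ℕ → ℝ, q = ∑ k ∈ Finset.range m, C (c k) * p k := by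
  induction m generalizing q with
  | zero => exact ⟨0, by simpa using hq⟩
  | succ m ih =>
    have hpm : (p m).leadingCoeff ≠ 0 :=
      leadingCoeff_ne_zero.2 fun h => by simpa [h] using hdeg m
    set μ := q.coeff m / (p m).leadingCoeff
    have hlt : (q - C μ * p m).degree < m := by
      refine (degree_lt_iff_coeff_zero _ _).2 fun i hi => ?_
      rw [coeff_sub, coeff_C_mul]
      rcases hi.eq_or_lt with h | hi
      · rw [← h, show (p m).coeff m = (p m).leadingCoeff by
          rw [leadingCoeff, natDegree_eq_of_degree_eq_some (hdeg m)], div_mul_cancel₀ _ hpm,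
          sub_self]
      · rw [coeff_eq_zero_of_degree_lt (hq.trans_le (by exact_mod_cast hi)),
          coeff_eq_zero_of_degree_lt ((hdeg m).trans_lt (by exact_mod_cast hi)), mul_zero, sub_zero]
    obtain ⟨c, hc⟩ := ih hlt
    refine ⟨Function.update c m μ, ?_⟩
    rw [Finset.sum_range_succ, Function.update_self, Finset.sum_congr rfl fun k hk => by
      rw [Function.update_of_ne (Finset.mem_range.1 hk).ne], ← hc, sub_add_cancel]

def weightedIntegral (w : ℝ → ℝ) (hw : ∀ q : ℝ[X], Integrable fun y => q.eval y * w y) :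
    ℝ[X] →ₗ[ℝ] ℝ where
  toFun q := ∫ y, q.eval y * w y
  map_add' q r := by simp only [eval_add, add_mul, integral_add (hw q) (hw r)]
  map_smul' c q := by simp only [eval_smul, smul_eq_mul, mul_assoc, integral_const_mul,
    RingHom.id_apply]

theorem weightedIntegral_apply {w : ℝ → ℝ} (hw : ∀ q : ℝ[X], Integrable fun y => q.eval y * w y)
    (q : ℝ[X]) : weightedIntegral w hw q = ∫ y, q.eval y * w y := rfl

section Orthonormal

variable {p : ℕ → ℝ[X]} {w : ℝ → ℝ} {hw : ∀ q : ℝ[X], Integrable fun y => q.eval y * w y}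
  (horth : ∀ j k, weightedIntegral w hw (p j * p k) = if j = k then 1 else 0)
include horth

theorem weightedIntegral_sum_mul (c : ℕ → ℝ) (M k : ℕ) :
    weightedIntegral w hw ((∑ l ∈ Finset.range M, C (c l) * p l) * p k) =
      if k < M then c k else 0 := by
  simp only [Finset.sum_mul, map_sum, C_mul', smul_mul_assoc, map_smul, horth, smul_eq_mul,
    mul_ite, mul_one, mul_zero, Finset.sum_ite_eq', Finset.mem_range]

theorem weightedIntegral_mul_eq_zero_of_degree_lt (hdeg : ∀ k, (p k).degree = k) {q : ℝ[X]}
    {j : ℕ} (hq : q.degree < j) : weightedIntegral w hw (q * p j) = 0 := by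
  obtain ⟨c, rfl⟩ := exists_eq_sum_of_degree_lt hdeg hq
  simp [weightedIntegral_sum_mul horth]

theorem weightedIntegral_mul_mul_eq_polyOfJac {a b : ℕ → ℝ}
    (hrec : ThreeTermRecurrence p a b)
    (W : ℝ[X]) (j k : ℕ) : weightedIntegral w hw (W * p j * p k) = polyOfJac W a b j k := by
  rw [mul_eq_sum_polyOfJac hrec W j, weightedIntegral_sum_mul horth]
  split_ifs with h
  · rfl
  · exact (polyOfJac_eq_zero_of_lt W a b (by omega)).symm

end Orthonormal

/-- The string equation. Expand `p_j'` in the `p_k`, `k < j`, and integrate `(p_j p_k)'` by parts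
against `e^{-R}`. -/
theorem derivative_eq_sum_polyOfJac {R : ℝ[X]} {c C₀ : ℝ} (hc : 0 < c)
    (hR : ∀ y, c * y ^ 2 - C₀ ≤ R.eval y) {p : ℕ → ℝ[X]} {a b : ℕ → ℝ}
    (hdeg : ∀ k, (p k).degree = k)
    (horth : ∀ j k, ∫ y, (p j * p k).eval y * exp (-R.eval y) = if j = k then 1 else 0)
    (hrec : ThreeTermRecurrence p a b)
    (j : ℕ) :
    (p j).derivative = ∑ k ∈ Finset.range j, C (polyOfJac R.derivative a b j k) * p k := by
  set L := weightedIntegral (fun y => exp (-R.eval y))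
    fun q => integrable_eval_mul_exp_neg q R.continuous hc hR
  have horth' : ∀ j k, L (p j * p k) = if j = k then 1 else 0 := horth
  have hder : ∀ k, (p k).derivative.degree < k := fun k =>
    (degree_derivative_lt fun h => by simpa [h] using hdeg k).trans_eq (hdeg k)
  obtain ⟨μ, hμ⟩ := exists_eq_sum_of_degree_lt hdeg (hder j)
  refine hμ.trans (Finset.sum_congr rfl fun k hk => ?_)
  have hkj : k < j := Finset.mem_range.1 hk
  have hparts : L ((p j * p k).derivative - R.derivative * (p j * p k)) = 0 := by
    simpa [L, weightedIntegral_apply, sub_mul] using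
      integral_derivative_sub_mul_exp_neg R (p j * p k) hc hR
  have hcoeff : L ((p j).derivative * p k) = μ k := by
    rw [hμ, weightedIntegral_sum_mul horth', if_pos hkj]
  have hlower : L (p j * (p k).derivative) = 0 := by
    rw [mul_comm]
    exact weightedIntegral_mul_eq_zero_of_degree_lt horth' hdeg
      ((hder k).trans (by exact_mod_cast hkj))
  rw [derivative_mul, map_sub, map_add, ← mul_assoc, hcoeff, hlower,
    weightedIntegral_mul_mul_eq_polyOfJac horth' hrec] at hparts
  rw [show μ k = polyOfJac R.derivative a b j k by linarith]

theorem sum_nonstationary_mul_eq {p : ℕ → ℝ[X]} {a b : ℕ → ℝ}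
    (hrec : ThreeTermRecurrence p a b)
    {V : ℝ[X]} {N : ℝ} (hN : N ≠ 0) {j : ℕ}
    (hder : (p j).derivative =
      ∑ k ∈ Finset.range j, C (N * polyOfJac V.derivative a b j k) * p k)
    (c σ : ℝ) :
    ∑ k ∈ Finset.range (j + V.natDegree + 2),
        C (if k < j then c * jacEntry a b j k
          else c * jacEntry a b j k + σ * polyOfJac V.derivative a b j k) * p k =
      C c * (X * p j) + C σ * (V.derivative * p j - C N⁻¹ * (p j).derivative) := by
  set M := j + V.natDegree + 2
  have hX : ∑ k ∈ Finset.range M, C (jacEntry a b j k) * p k = X * p j := by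
    rw [X_mul_eq_sum_jacEntry hrec, Finset.eventually_constant_sum (N := j + 2)
      (fun k hk => by rw [jacEntry_eq_zero_of_lt (by omega), C_0, zero_mul]) (by omega)]
  have hV : ∑ k ∈ Finset.range M, C (polyOfJac V.derivative a b j k) * p k =
      V.derivative * p j := by
    have := natDegree_derivative_le V
    rw [mul_eq_sum_polyOfJac hrec, Finset.eventually_constant_sum
      (N := j + V.derivative.natDegree + 1)
      (fun k hk => by rw [polyOfJac_eq_zero_of_lt _ a b (by omega), C_0, zero_mul]) (by omega)]
  have hlow : ∑ k ∈ Finset.range j, C (polyOfJac V.derivative a b j k) * p k =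
      C N⁻¹ * (p j).derivative := by
    simp only [hder, Finset.mul_sum, ← mul_assoc, ← C_mul, inv_mul_cancel₀ hN, one_mul]
  calc _ = ∑ k ∈ Finset.range M, (C c * (C (jacEntry a b j k) * p k) +
        C σ * (if k < j then 0 else C (polyOfJac V.derivative a b j k) * p k)) := by
        refine Finset.sum_congr rfl fun k _ => ?_
        split_ifs <;> simp only [C_add, C_mul] <;> ring
    _ = _ := by
      rw [Finset.sum_add_distrib, ← Finset.mul_sum, ← Finset.mul_sum,
        Finset.sum_range_ite_lt _ (by omega), hX, hV, hlow]

theorem polyOfJac_C_mul (r : ℝ) (W : ℝ[X]) (a b : ℕ → ℝ) (i j : ℕ) :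
    polyOfJac (C r * W) a b i j = r * polyOfJac W a b i j := by
  rcases eq_or_ne r 0 with rfl | hr
  · simp [polyOfJac]
  · simp only [polyOfJac, natDegree_C_mul hr, coeff_C_mul, Finset.mul_sum, mul_assoc]

/-- `e^{-R(y)}` is the Mehler kernel in the integrand of `φ^t(x)`, with `c = e^{-t}`; it is written
through `(c y - x)²` to exhibit its quadratic lower bound. -/
def mehlerExponent (V : ℝ[X]) (n x c : ℝ) : ℝ[X] :=
  C n * V + C (n / (2 * (1 - c ^ 2))) * (C c * X - C x) ^ 2 - C (n * x ^ 2 / 2)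

section Mehler

variable {V : ℝ[X]} {n x c : ℝ}

theorem eval_mehlerExponent (hc : c ^ 2 ≠ 1) (y : ℝ) :
    (mehlerExponent V n x c).eval y =
      n * (V.eval y + (c ^ 2 * (x ^ 2 + y ^ 2) - 2 * c * x * y) / (2 * (1 - c ^ 2))) := by
  have : 1 - c ^ 2 ≠ 0 := sub_ne_zero.2 (Ne.symm hc)
  simp only [mehlerExponent, eval_sub, eval_add, eval_mul, eval_C, eval_pow, eval_X]
  field_simp
  ring

theorem eval_derivative_mehlerExponent (y : ℝ) :
    (mehlerExponent V n x c).derivative.eval y =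
      n * V.derivative.eval y + n * c * (c * y - x) / (1 - c ^ 2) := by
  simp only [mehlerExponent, derivative_sub, derivative_add, derivative_C, derivative_pow,
    derivative_X, derivative_mul, eval_sub, eval_add, eval_mul, eval_C, eval_pow, eval_X,
    eval_zero, eval_one, div_eq_mul_inv, mul_inv]
  ring

theorem quadratic_le_eval_mehlerExponent {κ K : ℝ} (hV : ∀ y, κ * y ^ 2 - K ≤ V.eval y)
    (hn : 0 < n) (hc : c ^ 2 < 1) (y : ℝ) :
    n * κ * y ^ 2 - (n * K + n * x ^ 2 / 2) ≤ (mehlerExponent V n x c).eval y := by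
  have hsq : 0 ≤ n / (2 * (1 - c ^ 2)) * (c * y - x) ^ 2 :=
    mul_nonneg (div_nonneg hn.le (by linarith)) (sq_nonneg _)
  simp only [mehlerExponent, eval_sub, eval_add, eval_mul, eval_C, eval_pow, eval_X]
  nlinarith [mul_le_mul_of_nonneg_left (hV y) hn.le]

end Mehler

theorem mul_integral_mehler_eq_sum {V : ℝ[X]} {κ K : ℝ} (hκ : 0 < κ)
    (hV : ∀ y, κ * y ^ 2 - K ≤ V.eval y) {n c : ℝ} (hn : 0 < n) (hc₀ : 0 < c) (hc₁ : c < 1)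
    {p : ℕ → ℝ[X]} {a b : ℕ → ℝ}
    (hrec : ThreeTermRecurrence p a b)
    (hder : ∀ j, (p j).derivative =
      ∑ k ∈ Finset.range j, C (n * polyOfJac V.derivative a b j k) * p k)
    (x : ℝ) (j : ℕ) :
    x * ∫ y, (p j).eval y * exp (-(mehlerExponent V n x c).eval y) =
      ∑ k ∈ Finset.range (j + V.natDegree + 2),
        (if k < j then c * jacEntry a b j k
          else c * jacEntry a b j k + (1 - c ^ 2) / c * polyOfJac V.derivative a b j k) *
          ∫ y, (p k).eval y * exp (-(mehlerExponent V n x c).eval y) := by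
  set R := mehlerExponent V n x c
  have hc : c ^ 2 < 1 := by nlinarith
  have hs : 1 - c ^ 2 ≠ 0 := (sub_pos.2 hc).ne'
  have hR := quadratic_le_eval_mehlerExponent (x := x) hV hn hc
  set L := weightedIntegral (fun y => exp (-R.eval y))
    fun q => integrable_eval_mul_exp_neg q R.continuous (mul_pos hn hκ) hR
  have hparts : L ((p j).derivative - R.derivative * p j) = 0 := by
    simpa [L, weightedIntegral_apply, sub_mul] using
      integral_derivative_sub_mul_exp_neg R (p j) (mul_pos hn hκ) hR
  have hsplit : C x * p j =
      ∑ k ∈ Finset.range (j + V.natDegree + 2),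
        C (if k < j then c * jacEntry a b j k
          else c * jacEntry a b j k + (1 - c ^ 2) / c * polyOfJac V.derivative a b j k) * p k +
      C ((1 - c ^ 2) / (n * c)) * ((p j).derivative - R.derivative * p j) := by
    rw [sum_nonstationary_mul_eq hrec hn.ne' (hder j)]
    refine Polynomial.funext fun y => ?_
    simp only [eval_add, eval_sub, eval_mul, eval_C, eval_X, R, eval_derivative_mehlerExponent]
    field_simp
    ring
  have := congrArg L hsplit
  simpa only [C_mul', map_add, map_sum, map_smul, hparts, smul_zero, add_zero, smul_eq_mul,
    mul_zero, L, weightedIntegral_apply] using this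

/-- Indices are shifted by one: `Φ t j` is `φ_{j+1}^t`, built on `p j`, and row `j` of `𝕁^t` is
indexed the same way. -/
theorem nonstationary_recurrence_general
    (V : Polynomial ℝ) (hVdeg : Even V.natDegree) (hVlead : 0 < V.leadingCoeff)
    (n : ℕ) (hn : 1 ≤ n)
    -- the orthonormal polynomials for `e^{-nV(x)} dx`
    (p : ℕ → Polynomial ℝ)
    (hdeg : ∀ j, (p j).natDegree = j)
    (horth : ∀ j k, (∫ x : ℝ, (p j).eval x * (p k).eval x * Real.exp (-(n : ℝ) * V.eval x))
      = if j = k then 1 else 0)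
    -- the three-term recurrence defining the Jacobi matrix `𝒥`
    (a b : ℕ → ℝ)
    (hrec : ∀ j (x : ℝ), x * (p j).eval x =
      a (j + 1) * (p (j + 1)).eval x + b j * (p j).eval x +
        (if j = 0 then 0 else a j * (p (j - 1)).eval x))
    -- the functions `φ_j^t`
    (Φ : ℝ → ℕ → ℝ → ℝ)
    (hΦpos : ∀ t : ℝ, 0 < t → ∀ j (x : ℝ), Φ t j x =
      (Real.sqrt (2 * Real.pi * (1 - Real.exp (-2 * t))))⁻¹ *
        ∫ y : ℝ, (p j).eval y *
          Real.exp (-(n : ℝ) * (V.eval y +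
            (Real.exp (-2 * t) * (x ^ 2 + y ^ 2) - 2 * Real.exp (-t) * x * y) /
              (2 * (1 - Real.exp (-2 * t))))))
    (hΦ0 : ∀ j x, Φ 0 j x = (p j).eval x) :
    ∀ t : ℝ, 0 ≤ t → ∀ j (x : ℝ),
      x * Φ t j x =
        ∑ k ∈ Finset.range (j + V.natDegree + 2),
          (if k < j then Real.exp (-t) * jacEntry a b j k
           else Real.exp (-t) * jacEntry a b j k +
             2 * Real.sinh t * polyOfJac V.derivative a b j k) * Φ t k x := by
  intro t ht j x
  have hN : (0 : ℝ) < n := by exact_mod_cast hn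
  have hpdeg : ∀ k, (p k).degree = k := fun k =>
    (degree_eq_iff_natDegree_eq fun h => by simpa [h] using horth k k).2 (hdeg k)
  have hVpos : 0 < V.natDegree :=
    natDegree_pos_of_integral_ne_zero (hdeg 0) (by rw [horth, if_pos rfl]; exact one_ne_zero)
  obtain ⟨κ, hκ, K, hK⟩ := exists_quadratic_le_eval hVdeg hVpos hVlead
  have hder : ∀ j, (p j).derivative =
      ∑ k ∈ Finset.range j, C (n * polyOfJac V.derivative a b j k) * p k := fun j => by
    simpa only [derivative_C_mul, polyOfJac_C_mul] using
      derivative_eq_sum_polyOfJac (R := C (n : ℝ) * V) (mul_pos hN hκ) (C₀ := n * K)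
        (fun y => by rw [eval_mul, eval_C]; nlinarith [hK y]) hpdeg
        (fun j k => by simpa only [eval_mul, eval_C, neg_mul] using horth j k) hrec j
  rcases ht.eq_or_lt with rfl | ht
  · have := congrArg (eval x) (sum_nonstationary_mul_eq hrec hN.ne' (hder j) 1 0)
    simpa [hΦ0, eval_finsetSum] using this.symm
  have hc₁ : exp (-t) < 1 := exp_lt_one_iff.2 (neg_neg_of_pos ht)
  have hΦ : ∀ k, Φ t k x = (√(2 * π * (1 - exp (-t) ^ 2)))⁻¹ *
      ∫ y, (p k).eval y * exp (-(mehlerExponent V n x (exp (-t))).eval y) := fun k => by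
    rw [hΦpos t ht k x, show exp (-2 * t) = exp (-t) ^ 2 by rw [sq, ← exp_add]; ring_nf]
    simp only [eval_mehlerExponent (pow_lt_one₀ (exp_pos _).le hc₁ two_ne_zero).ne, neg_mul]
  simp only [hΦ, two_mul_sinh_eq]
  rw [mul_left_comm, mul_integral_mehler_eq_sum hκ hK hN (exp_pos _) hc₁ hrec hder,
    Finset.mul_sum]
  exact Finset.sum_congr rfl fun k _ => by ring

/-- **Lemma (recurrence for the non-stationary model).**
Let `V` be a real polynomial of even degree with positive leading coefficient, `p_j` the
orthonormal polynomials w.r.t. `e^{-nV(x)}dx` with Jacobi matrix `𝒥` (recurrence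
coefficients `a_k, b_k`), and for `t > 0` let
`φ_j^t(x) = (2π(1-e^{-2t}))^{-1/2} ∫ p_{j-1}(y) e^{-n[V(y) + (e^{-2t}(x²+y²) - 2e^{-t}xy)/(2(1-e^{-2t}))]} dy`,
`φ_j^0 = p_{j-1}`.  Then `x φ_j^t(x) = Σ_k (𝕁^t)_{j,k} φ_k^t(x)` where
`(𝕁^t)_{j,k} = e^{-t} 𝒥_{j,k}` for `j > k` and
`(𝕁^t)_{j,k} = e^{-t} 𝒥_{j,k} + 2 sinh(t) (V'(𝒥))_{j,k}` for `j ≤ k`.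
(Everything is written 0-based: `φ_{j+1} ↦ Φ j`, `p_{j-1} ↦ p (j-1)`, and the sum over
`k` is the finite sum over the band of `𝕁^t`.) -/
theorem nonstationary_recurrence
    (V : Polynomial ℝ) (hVdeg : Even V.natDegree) (hVlead : 0 < V.leadingCoeff)
    (n : ℕ) (hn : 1 ≤ n)
    -- the orthonormal polynomials for `e^{-nV(x)} dx`
    (p : ℕ → Polynomial ℝ)
    (hdeg : ∀ j, (p j).natDegree = j)
    (hlead : ∀ j, 0 < (p j).leadingCoeff)
    (horth : ∀ j k, (∫ x : ℝ, (p j).eval x * (p k).eval x * Real.exp (-(n : ℝ) * V.eval x))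
      = if j = k then 1 else 0)
    -- the three-term recurrence defining the Jacobi matrix `𝒥`
    (a b : ℕ → ℝ)
    (hrec : ∀ j (x : ℝ), x * (p j).eval x =
      a (j + 1) * (p (j + 1)).eval x + b j * (p j).eval x +
        (if j = 0 then 0 else a j * (p (j - 1)).eval x))
    -- the functions `φ_j^t`
    (Φ : ℝ → ℕ → ℝ → ℝ)
    (hΦpos : ∀ t : ℝ, 0 < t → ∀ j (x : ℝ), Φ t j x =
      (Real.sqrt (2 * Real.pi * (1 - Real.exp (-2 * t))))⁻¹ *
        ∫ y : ℝ, (p j).eval y *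
          Real.exp (-(n : ℝ) * (V.eval y +
            (Real.exp (-2 * t) * (x ^ 2 + y ^ 2) - 2 * Real.exp (-t) * x * y) /
              (2 * (1 - Real.exp (-2 * t))))))
    (hΦ0 : ∀ j x, Φ 0 j x = (p j).eval x) :
    ∀ t : ℝ, 0 ≤ t → ∀ j (x : ℝ),
      x * Φ t j x =
        ∑ k ∈ Finset.range (j + V.natDegree + 2),
          (if k < j then Real.exp (-t) * jacEntry a b j k
           else Real.exp (-t) * jacEntry a b j k +
             2 * Real.sinh t * polyOfJac V.derivative a b j k) * Φ t k x :=
  nonstationary_recurrence_general V hVdeg hVlead n hn p hdeg horth a b hrec Φ hΦpos hΦ0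

end
end
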